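/- arXiv:2404.13247 — 9 statements merged into one kernel-verified Lean document; each statement's English description precedes it below -/
import Mathlib

section
/- For all positive reals c₁, c₂, the quantity I₁(c₁,c₂) = 3 + (1 − c₁² − c₂²)²/(c₁c₂)^(4/3) − 4(c₁c₂)^(2/3) is nonnegative, with equality if and only if c₁ = c₂ = 1. -/
/-!
Write `c₁ c₂ = r³` with `r > 0` and `s = c₁² + c₂²`, so that `s ≥ 2r³` by AM-GM and
`I₁ = ((1 - s)² + 3r⁴ - 4r⁶) / r⁴`.
If `2r³ < 1`, then `4r² < 3` and already `3r⁴ - 4r⁶ > 0`.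
If `2r³ ≥ 1`, the numerator splits as `(r - 1)²(3r² + 2r + 1) + (s - 2r³)(s + 2r³ - 2)`,
a sum of two nonnegative terms which vanish together only at `r = 1`, `s = 2`.
-/

namespace SU2Defect

/-- `r⁴ I₁(c₁, c₂)` in the variables `r = (c₁ c₂)^(1/3)`, `s = c₁² + c₂²`. -/
def numerator (r s : ℝ) : ℝ := (1 - s) ^ 2 + 3 * r ^ 4 - 4 * r ^ 6

variable {r s : ℝ}

lemma numerator_eq_add_mul :
    numerator r s =
      (r - 1) ^ 2 * (3 * r ^ 2 + 2 * r + 1) + (s - 2 * r ^ 3) * (s + 2 * r ^ 3 - 2) := by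
  unfold numerator; ring

lemma numerator_pos_of_two_mul_pow_three_lt_one (hr : 0 < r) (h : 2 * r ^ 3 < 1) :
    0 < numerator r s := by
  have hr6 : 4 * r ^ 6 < 1 := by nlinarith [pow_pos hr 3]
  have hr2 : 4 * r ^ 2 < 3 := by
    by_contra! h3
    have : (3 : ℝ) ^ 3 ≤ (4 * r ^ 2) ^ 3 := pow_le_pow_left₀ (by norm_num) h3 3
    nlinarith
  have : 0 < r ^ 4 * (3 - 4 * r ^ 2) := mul_pos (pow_pos hr 4) (by linarith)
  unfold numerator; nlinarith [sq_nonneg (1 - s)]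

lemma numerator_pos (hr : 0 < r) (hs : 2 * r ^ 3 ≤ s) (hne : ¬(r = 1 ∧ s = 2)) :
    0 < numerator r s := by
  rcases lt_or_ge (2 * r ^ 3) 1 with hsmall | hlarge
  · exact numerator_pos_of_two_mul_pow_three_lt_one hr hsmall
  have hA : 0 ≤ (r - 1) ^ 2 * (3 * r ^ 2 + 2 * r + 1) := by positivity
  have hB : 0 ≤ (s - 2 * r ^ 3) * (s + 2 * r ^ 3 - 2) :=
    mul_nonneg (by linarith) (by linarith)
  rw [numerator_eq_add_mul]
  refine lt_of_le_of_ne (add_nonneg hA hB) fun h0 => hne ?_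
  have hr1 : r = 1 := by
    have : (r - 1) ^ 2 * (3 * r ^ 2 + 2 * r + 1) = 0 := by linarith
    rcases mul_eq_zero.mp this with h | h
    · exact sub_eq_zero.mp (pow_eq_zero_iff two_ne_zero |>.mp h)
    · nlinarith
  subst hr1
  have : (s - 2) * s = 0 := by linarith
  rcases mul_eq_zero.mp this with h | h
  · exact ⟨rfl, by linarith⟩
  · norm_num at hs; linarith

lemma numerator_eq_zero_iff (hr : 0 < r) (hs : 2 * r ^ 3 ≤ s) :
    numerator r s = 0 ↔ r = 1 ∧ s = 2 := by
  refine ⟨fun h => ?_, ?_⟩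
  · by_contra hne
    exact (numerator_pos hr hs hne).ne' h
  · rintro ⟨rfl, rfl⟩
    norm_num [numerator]

lemma numerator_nonneg (hr : 0 < r) (hs : 2 * r ^ 3 ≤ s) : 0 ≤ numerator r s := by
  by_cases h : r = 1 ∧ s = 2
  · exact ((numerator_eq_zero_iff hr hs).mpr h).ge
  · exact (numerator_pos hr hs h).le

lemma defect_eq_numerator_div {c₁ c₂ r : ℝ} (hr : 0 < r) (hc : c₁ * c₂ = r ^ 3) :
    3 + (1 - c₁ ^ 2 - c₂ ^ 2) ^ 2 / (c₁ * c₂) ^ ((4 : ℝ) / 3)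
        - 4 * (c₁ * c₂) ^ ((2 : ℝ) / 3) = numerator r (c₁ ^ 2 + c₂ ^ 2) / r ^ 4 := by
  have h4 : (r ^ 3) ^ ((4 : ℝ) / 3) = r ^ 4 := by
    rw [← Real.rpow_natCast_mul hr.le]; norm_num
  have h2 : (r ^ 3) ^ ((2 : ℝ) / 3) = r ^ 2 := by
    rw [← Real.rpow_natCast_mul hr.le]; norm_num
  rw [hc, h4, h2, numerator]
  field_simp
  ring

lemma eq_one_of_mul_eq_one_of_sq_add_sq_eq_two {c₁ c₂ : ℝ} (h₁ : 0 < c₁)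
    (hprod : c₁ * c₂ = 1) (hsum : c₁ ^ 2 + c₂ ^ 2 = 2) : c₁ = 1 ∧ c₂ = 1 := by
  have hc : c₁ = c₂ := by nlinarith [sq_nonneg (c₁ - c₂)]
  subst hc
  have : c₁ = 1 := by nlinarith
  exact ⟨this, this⟩

end SU2Defect

open SU2Defect in
/-- For all positive reals `c₁, c₂`, the quantity
`I₁(c₁,c₂) = 3 + (1 − c₁² − c₂²)²/(c₁c₂)^(4/3) − 4(c₁c₂)^(2/3)` is nonnegative,
with equality iff `c₁ = c₂ = 1`. -/
theorem su2_defect_nonneg (c₁ c₂ : ℝ) (h₁ : 0 < c₁) (h₂ : 0 < c₂) :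
    0 ≤ 3 + (1 - c₁ ^ 2 - c₂ ^ 2) ^ 2 / (c₁ * c₂) ^ ((4 : ℝ) / 3)
        - 4 * (c₁ * c₂) ^ ((2 : ℝ) / 3) ∧
    (3 + (1 - c₁ ^ 2 - c₂ ^ 2) ^ 2 / (c₁ * c₂) ^ ((4 : ℝ) / 3)
        - 4 * (c₁ * c₂) ^ ((2 : ℝ) / 3) = 0 ↔ c₁ = 1 ∧ c₂ = 1) := by
  obtain ⟨r, hr, hc⟩ : ∃ r : ℝ, 0 < r ∧ c₁ * c₂ = r ^ 3 :=
    ⟨_, Real.rpow_pos_of_pos (mul_pos h₁ h₂) _,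
      (Real.rpow_inv_natCast_pow (mul_pos h₁ h₂).le three_ne_zero).symm⟩
  have hs : 2 * r ^ 3 ≤ c₁ ^ 2 + c₂ ^ 2 := by rw [← hc]; nlinarith [sq_nonneg (c₁ - c₂)]
  rw [defect_eq_numerator_div hr hc, div_eq_zero_iff, numerator_eq_zero_iff hr hs]
  refine ⟨div_nonneg (numerator_nonneg hr hs) (pow_pos hr 4).le, ?_⟩
  simp only [pow_eq_zero_iff four_ne_zero, hr.ne', or_false]
  constructor
  · rintro ⟨rfl, hsum⟩
    exact eq_one_of_mul_eq_one_of_sq_add_sq_eq_two h₁ (by simpa using hc) hsum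
  · rintro ⟨rfl, rfl⟩
    refine ⟨(pow_eq_one_iff_of_nonneg hr.le three_ne_zero).mp ?_, by norm_num⟩
    simpa using hc.symm
end

section
/- For all positive reals c₁, c₂, c₃, 3 − (c₁c₂c₃)^(−4/3)·[2c₁²(c₂² + c₃²) − c₁⁴ − (c₂² − c₃²)²] ≥ 0, with equality if and only if c₁ = c₂ = c₃. -/
lemma schur_aux (x y z : ℝ) (hx : 0 ≤ x) (hy : 0 ≤ y) (hz : 0 ≤ z) :
    0 ≤ x*(x-y)*(x-z) + y*(y-x)*(y-z) + z*(z-x)*(z-y) := by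
  rcases le_total x y with h | h <;> rcases le_total y z with h' | h' <;>
    rcases le_total x z with h'' | h'' <;>
    nlinarith [mul_nonneg hx hy, mul_nonneg hy hz, mul_nonneg hx hz,
      sq_nonneg (x-y), sq_nonneg (y-z), sq_nonneg (x-z),
      mul_nonneg (mul_nonneg hx hy) hz]

lemma key_ineq (a b c : ℝ) :
    a^2*b^2*(a-b)^2 + b^2*c^2*(b-c)^2 + c^2*a^2*(c-a)^2 ≤
      a^6 + b^6 + c^6 + 3*a^2*b^2*c^2 - 2*(a^3*b^3 + b^3*c^3 + c^3*a^3) := by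
  have h := schur_aux (a^2) (b^2) (c^2) (sq_nonneg a) (sq_nonneg b) (sq_nonneg c)
  nlinarith [h]

lemma cube_pow (x : ℝ) (hx : 0 < x) : (x ^ ((2:ℝ)/3)) ^ (3:ℕ) = x ^ (2:ℕ) := by
  rw [← Real.rpow_natCast x 2, ← Real.rpow_natCast (x ^ ((2:ℝ)/3)) 3,
    ← Real.rpow_mul hx.le]
  norm_num

lemma sq_rpow (x : ℝ) (hx : 0 < x) : (x ^ ((2:ℝ)/3)) ^ (2:ℕ) = x ^ ((4:ℝ)/3) := by
  rw [← Real.rpow_natCast (x ^ ((2:ℝ)/3)) 2, ← Real.rpow_mul hx.le]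
  norm_num

/-- For all positive reals `c₁, c₂, c₃`, the scaling-invariant quantity
`3 − (c₁c₂c₃)^(−4/3)·[2c₁²(c₂² + c₃²) − c₁⁴ − (c₂² − c₃²)²]` is nonnegative,
with equality iff `c₁ = c₂ = c₃`. -/
theorem su2_scalar_defect_nonneg (c₁ c₂ c₃ : ℝ) (h₁ : 0 < c₁) (h₂ : 0 < c₂) (h₃ : 0 < c₃) :
    0 ≤ 3 - (c₁ * c₂ * c₃) ^ (-(4 : ℝ) / 3) *
        (2 * c₁ ^ 2 * (c₂ ^ 2 + c₃ ^ 2) - c₁ ^ 4 - (c₂ ^ 2 - c₃ ^ 2) ^ 2) ∧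
    (3 - (c₁ * c₂ * c₃) ^ (-(4 : ℝ) / 3) *
        (2 * c₁ ^ 2 * (c₂ ^ 2 + c₃ ^ 2) - c₁ ^ 4 - (c₂ ^ 2 - c₃ ^ 2) ^ 2) = 0
      ↔ c₁ = c₂ ∧ c₂ = c₃) := by
  obtain ⟨a, ha, e1, f1⟩ : ∃ a : ℝ, 0 < a ∧ c₁ ^ 2 = a ^ 3 ∧ c₁ ^ ((4:ℝ)/3) = a ^ 2 :=
    ⟨c₁ ^ ((2:ℝ)/3), Real.rpow_pos_of_pos h₁ _, (cube_pow c₁ h₁).symm, (sq_rpow c₁ h₁).symm⟩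
  obtain ⟨b, hb, e2, f2⟩ : ∃ b : ℝ, 0 < b ∧ c₂ ^ 2 = b ^ 3 ∧ c₂ ^ ((4:ℝ)/3) = b ^ 2 :=
    ⟨c₂ ^ ((2:ℝ)/3), Real.rpow_pos_of_pos h₂ _, (cube_pow c₂ h₂).symm, (sq_rpow c₂ h₂).symm⟩
  obtain ⟨c, hc, e3, f3⟩ : ∃ c : ℝ, 0 < c ∧ c₃ ^ 2 = c ^ 3 ∧ c₃ ^ ((4:ℝ)/3) = c ^ 2 :=
    ⟨c₃ ^ ((2:ℝ)/3), Real.rpow_pos_of_pos h₃ _, (cube_pow c₃ h₃).symm, (sq_rpow c₃ h₃).symm⟩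
  have hp : (c₁ * c₂ * c₃) ^ (-(4 : ℝ) / 3) = (a^2 * b^2 * c^2)⁻¹ := by
    rw [show (-(4:ℝ)/3) = -((4:ℝ)/3) by norm_num,
      Real.rpow_neg (by positivity),
      Real.mul_rpow (by positivity) h₃.le, Real.mul_rpow h₁.le h₂.le, f1, f2, f3]
  have hE : 2 * c₁ ^ 2 * (c₂ ^ 2 + c₃ ^ 2) - c₁ ^ 4 - (c₂ ^ 2 - c₃ ^ 2) ^ 2
      = 2 * a^3 * (b^3 + c^3) - a^6 - (b^3 - c^3)^2 := by
    rw [show c₁^4 = (c₁^2)^2 by ring, e1, e2, e3]; ring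
  have hppos : 0 < a^2 * b^2 * c^2 := by positivity
  have hQ : 3 - (c₁ * c₂ * c₃) ^ (-(4 : ℝ) / 3) *
        (2 * c₁ ^ 2 * (c₂ ^ 2 + c₃ ^ 2) - c₁ ^ 4 - (c₂ ^ 2 - c₃ ^ 2) ^ 2)
      = (a^2 * b^2 * c^2)⁻¹ *
        (a^6 + b^6 + c^6 + 3*a^2*b^2*c^2 - 2*(a^3*b^3 + b^3*c^3 + c^3*a^3)) := by
    rw [hp, hE]
    field_simp
    ring
  have hFsq := key_ineq a b c
  have hFnn : 0 ≤ a^6 + b^6 + c^6 + 3*a^2*b^2*c^2 - 2*(a^3*b^3 + b^3*c^3 + c^3*a^3) := by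
    have h1 : (0:ℝ) ≤ a^2*b^2*(a-b)^2 + b^2*c^2*(b-c)^2 + c^2*a^2*(c-a)^2 := by positivity
    linarith
  refine ⟨by rw [hQ]; positivity, ?_, ?_⟩
  · intro h
    rw [hQ] at h
    have hF0 : a^6 + b^6 + c^6 + 3*a^2*b^2*c^2 - 2*(a^3*b^3 + b^3*c^3 + c^3*a^3) = 0 :=
      (mul_eq_zero.mp h).resolve_left (inv_ne_zero hppos.ne')
    have hs1 : (0:ℝ) ≤ a^2*b^2*(a-b)^2 := by positivity
    have hs2 : (0:ℝ) ≤ b^2*c^2*(b-c)^2 := by positivity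
    have hs3 : (0:ℝ) ≤ c^2*a^2*(c-a)^2 := by positivity
    have h1 : a^2*b^2*(a-b)^2 = 0 := le_antisymm (by linarith) hs1
    have h2 : b^2*c^2*(b-c)^2 = 0 := le_antisymm (by linarith) hs2
    have hab : a = b := by
      have hpos : (0:ℝ) < a^2*b^2 := by positivity
      have : (a-b)^2 = 0 := by
        rcases mul_eq_zero.mp h1 with h' | h'
        · exact absurd h' hpos.ne'
        · exact h'
      have := pow_eq_zero_iff (two_ne_zero) |>.mp this
      linarith
    have hbc : b = c := by
      have hpos : (0:ℝ) < b^2*c^2 := by positivity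
      have : (b-c)^2 = 0 := by
        rcases mul_eq_zero.mp h2 with h' | h'
        · exact absurd h' hpos.ne'
        · exact h'
      have := pow_eq_zero_iff (two_ne_zero) |>.mp this
      linarith
    have hc12 : c₁ ^ 2 = c₂ ^ 2 := by rw [e1, e2, hab]
    have hc23 : c₂ ^ 2 = c₃ ^ 2 := by rw [e2, e3, hbc]
    constructor
    · have : (c₁ - c₂) * (c₁ + c₂) = 0 := by linear_combination hc12
      have hpos : (0:ℝ) < c₁ + c₂ := by linarith
      have := (mul_eq_zero.mp this).resolve_right hpos.ne'
      linarith
    · have : (c₂ - c₃) * (c₂ + c₃) = 0 := by linear_combination hc23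
      have hpos : (0:ℝ) < c₂ + c₃ := by linarith
      have := (mul_eq_zero.mp this).resolve_right hpos.ne'
      linarith
  · rintro ⟨hab, hbc⟩
    have hA : a = b := by
      have h3 : a ^ 3 = b ^ 3 := by rw [← e1, ← e2, hab]
      have : (a - b) * (a^2 + a*b + b^2) = 0 := by linear_combination h3
      have hpos : (0:ℝ) < a^2 + a*b + b^2 := by positivity
      have := (mul_eq_zero.mp this).resolve_right hpos.ne'
      linarith
    have hB : b = c := by
      have h3 : b ^ 3 = c ^ 3 := by rw [← e2, ← e3, hbc]
      have : (b - c) * (b^2 + b*c + c^2) = 0 := by linear_combination h3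
      have hpos : (0:ℝ) < b^2 + b*c + c^2 := by positivity
      have := (mul_eq_zero.mp this).resolve_right hpos.ne'
      linarith
    rw [hQ, hA, hB]
    ring
end

section
/- Define, for c > 0, I(c) = 210 − c^(7/15)·(42/c − 56c + 224). Then I(1) = 0, I'(1) = 0, and I''(1) > 0; in particular c = 1 is an isolated local minimum of I on (0,∞). -/
/-!
The derivative factors as `I'(c) = (112/15) (11c - 3)(c - 1) c^(-23/15)`, so `I'(1) = 0` and
`I''(1) = (112/15) · 8 > 0`. A strict second-derivative test then makes `c = 1` an isolated
local minimum, since `I'` changes sign from negative to positive there.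
-/

/-- The normalized total scalar curvature defect for Spin(9)-invariant metrics on `S¹⁵`. -/
noncomputable def spin9Defect (c : ℝ) : ℝ :=
  210 - c ^ ((7 : ℝ) / 15) * (42 / c - 56 * c + 224)

open Filter Topology Set

theorem eventually_lt_of_deriv_deriv_pos {f : ℝ → ℝ} {x₀ : ℝ} (hf : 0 < deriv (deriv f) x₀)
    (hd : deriv f x₀ = 0) (hc : ContinuousAt f x₀) : ∀ᶠ x in 𝓝[≠] x₀, f x₀ < f x := by
  have hsign := nhdsWithin_le_nhds (s := {x₀}ᶜ) <|
    eventually_nhdsWithin_sign_eq_of_deriv_pos hf hd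
  obtain ⟨a, ha, hneg⟩ :=
    (nhdsLT_basis x₀).eventually_iff.mp (deriv_neg_left_of_sign_deriv hsign)
  obtain ⟨b, hb, hpos⟩ :=
    (nhdsGT_basis x₀).eventually_iff.mp (deriv_pos_right_of_sign_deriv hsign)
  have hcont : ContinuousOn f (Ioo a b) := by
    intro x hx
    rcases lt_trichotomy x x₀ with hlt | rfl | hgt
    · exact (differentiableAt_of_deriv_ne_zero (hneg ⟨hx.1, hlt⟩).ne).continuousAt
        |>.continuousWithinAt
    · exact hc.continuousWithinAt
    · exact (differentiableAt_of_deriv_ne_zero (hpos ⟨hgt, hx.2⟩).ne').continuousAt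
        |>.continuousWithinAt
  have hanti : StrictAntiOn f (Ioc a x₀) :=
    strictAntiOn_of_deriv_neg (convex_Ioc a x₀)
      (hcont.mono (Ioc_subset_Ioo_right hb)) (by simpa using fun x hx₁ hx₂ ↦ hneg ⟨hx₁, hx₂⟩)
  have hmono : StrictMonoOn f (Ico x₀ b) :=
    strictMonoOn_of_deriv_pos (convex_Ico x₀ b)
      (hcont.mono (Ico_subset_Ioo_left ha)) (by simpa using fun x hx₁ hx₂ ↦ hpos ⟨hx₁, hx₂⟩)
  rw [← nhdsLT_sup_nhdsGT, eventually_sup]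
  constructor
  · filter_upwards [Ioo_mem_nhdsLT ha] with x hx
    exact hanti ⟨hx.1, hx.2.le⟩ ⟨ha, le_rfl⟩ hx.2
  · filter_upwards [Ioo_mem_nhdsGT hb] with x hx
    exact hmono ⟨le_rfl, hb⟩ ⟨hx.1.le, hx.2⟩ hx.1

theorem spin9Defect_one : spin9Defect 1 = 0 := by
  norm_num [spin9Defect]

theorem hasDerivAt_spin9Defect {c : ℝ} (hc : 0 < c) :
    HasDerivAt spin9Defect (112 / 15 * ((11 * c - 3) * (c - 1)) * c ^ (-23 / 15 : ℝ)) c := by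
  have hpow : HasDerivAt (fun x : ℝ ↦ x ^ (7 / 15 : ℝ)) (7 / 15 * c ^ (7 / 15 - 1 : ℝ)) c :=
    Real.hasDerivAt_rpow_const (Or.inl hc.ne')
  have hR : HasDerivAt (fun x : ℝ ↦ 42 / x - 56 * x + 224) (-42 / c ^ 2 - 56) c := by
    simpa [div_eq_mul_inv, neg_div] using
      (((hasDerivAt_inv hc.ne').const_mul 42).sub ((hasDerivAt_id c).const_mul 56)).add_const 224
  refine ((hasDerivAt_const c 210).sub (hpow.mul hR)).congr_deriv ?_
  -- write both powers of `c` as `c ^ (-23/15)` times an integer power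
  rw [show (7 / 15 - 1 : ℝ) = -23 / 15 + 1 by norm_num, Real.rpow_add hc, Real.rpow_one,
    show (7 / 15 : ℝ) = -23 / 15 + 2 by norm_num, Real.rpow_add hc, Real.rpow_two]
  field_simp
  ring

theorem deriv_spin9Defect {c : ℝ} (hc : 0 < c) :
    deriv spin9Defect c = 112 / 15 * ((11 * c - 3) * (c - 1)) * c ^ (-23 / 15 : ℝ) :=
  (hasDerivAt_spin9Defect hc).deriv

theorem deriv_spin9Defect_one : deriv spin9Defect 1 = 0 := by
  norm_num [deriv_spin9Defect]

theorem hasDerivAt_deriv_spin9Defect_one : HasDerivAt (deriv spin9Defect) (896 / 15) 1 := by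
  have hpoly : HasDerivAt (fun c : ℝ ↦ 112 / 15 * ((11 * c - 3) * (c - 1))) (896 / 15) 1 := by
    refine (((((hasDerivAt_id' 1).const_mul 11).sub_const 3).mul
      ((hasDerivAt_id' 1).sub_const 1)).const_mul (112 / 15 : ℝ)).congr_deriv ?_
    norm_num
  have hpow : HasDerivAt (fun c : ℝ ↦ c ^ (-23 / 15 : ℝ)) (-23 / 15 * 1 ^ (-23 / 15 - 1 : ℝ)) 1 :=
    Real.hasDerivAt_rpow_const (Or.inl one_ne_zero)
  have hderiv : deriv spin9Defect =ᶠ[𝓝 1]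
      fun c ↦ 112 / 15 * ((11 * c - 3) * (c - 1)) * c ^ (-23 / 15 : ℝ) := by
    filter_upwards [Ioi_mem_nhds one_pos] with c hc using deriv_spin9Defect hc
  refine ((hpoly.mul hpow).congr_deriv ?_).congr_of_eventuallyEq hderiv
  norm_num

/-- `I(1) = 0`, `I'(1) = 0`, `I''(1) > 0`; in particular `c = 1` is an isolated local
minimum of `I` on `(0,∞)`. -/
theorem spin9_defect_isolated_local_min :
    spin9Defect 1 = 0 ∧ deriv spin9Defect 1 = 0 ∧ 0 < deriv (deriv spin9Defect) 1 ∧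
    ∃ ε > 0, ∀ c : ℝ, 0 < c → |c - 1| < ε → c ≠ 1 → 0 < spin9Defect c := by
  have hsecond : 0 < deriv (deriv spin9Defect) 1 := by
    rw [hasDerivAt_deriv_spin9Defect_one.deriv]; norm_num
  refine ⟨spin9Defect_one, deriv_spin9Defect_one, hsecond, ?_⟩
  have hmin := eventually_lt_of_deriv_deriv_pos hsecond deriv_spin9Defect_one
    (hasDerivAt_spin9Defect one_pos).continuousAt
  obtain ⟨ε, hε, hball⟩ := Metric.eventually_nhds_iff.mp (eventually_nhdsWithin_iff.mp hmin)
  refine ⟨ε, hε, fun c _ hc hne ↦ ?_⟩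
  simpa [spin9Defect_one] using hball (by rwa [Real.dist_eq]) hne
end

section
/- Fix an integer n ≥ 1 and reals r₊ > 0 and a with 0 ≤ a < r₊. Set ω = ω_{2n+1} > 0, m = r₊^(2(n+1)) / (2(r₊² − a²)) and 𝒜 = ω·r₊^(2(n+1)) / √(r₊² − a²). Then m = (r₊²/(r₊² − a²))^((n+1)/(2n+1)) · (1/2)·(𝒜/ω)^(2n/(2n+1)). Consequently m ≥ (1/2)(𝒜/ω)^(2n/(2n+1)), with equality if and only if a = 0. -/
/-!
Write `s = r₊²` and `d = r₊² − a²`, so that `m = s^(n+1) / (2d)` and `𝒜/ω = s^(n+1) / √d`.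
The exponents `(n+1)/(2n+1)` and `2n/(2n+1)` are exactly those for which the powers of `s` and
of `d` in `(s/d)^((n+1)/(2n+1)) · (𝒜/ω)^(2n/(2n+1))` recombine into `s^(n+1)/d`; this gives the
identity for `m`. Its prefactor is a positive power of `s/d ≥ 1`, which equals `1` only when
`s = d`, that is, when `a = 0`.
-/

open Real

lemma div_rpow_mul_rpow_div_sqrt {s d : ℝ} (hs : 0 < s) (hd : 0 < d) {α β γ : ℝ}
    (hs_exp : α + β * γ = β) (hd_exp : α + γ / 2 = 1) :
    (s / d) ^ α * (s ^ β / √d) ^ γ = s ^ β / d := by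
  rw [sqrt_eq_rpow, div_rpow hs.le hd.le, div_rpow (by positivity) (by positivity),
    ← rpow_mul hs.le, ← rpow_mul hd.le, div_mul_div_comm, ← rpow_add hs, ← rpow_add hd, hs_exp,
    one_div_mul_eq_div, hd_exp, rpow_one]

lemma rpow_mul_eq_self_iff {x q B : ℝ} (hx : 0 ≤ x) (hq : q ≠ 0) (hB : B ≠ 0) :
    x ^ q * B = B ↔ x = 1 := by
  rw [mul_eq_right₀ hB, ← rpow_left_inj hx zero_le_one hq, one_rpow]

theorem myersPerry_penrose_general (n : ℕ) (rp a ω : ℝ)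
    (ha : 0 ≤ a) (har : a < rp) (hω : 0 < ω)
    (m A : ℝ) (hm : m = rp ^ (2 * (n + 1)) / (2 * (rp ^ 2 - a ^ 2)))
    (hA : A = ω * rp ^ (2 * (n + 1)) / Real.sqrt (rp ^ 2 - a ^ 2)) :
    m = (rp ^ 2 / (rp ^ 2 - a ^ 2)) ^ (((n : ℝ) + 1) / (2 * n + 1)) *
        ((1 : ℝ) / 2 * (A / ω) ^ ((2 * (n : ℝ)) / (2 * n + 1))) ∧
    (1 : ℝ) / 2 * (A / ω) ^ ((2 * (n : ℝ)) / (2 * n + 1)) ≤ m ∧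
    (m = (1 : ℝ) / 2 * (A / ω) ^ ((2 * (n : ℝ)) / (2 * n + 1)) ↔ a = 0) := by
  set d := rp ^ 2 - a ^ 2
  have hd : 0 < d := sub_pos.2 (pow_lt_pow_left₀ har ha two_ne_zero)
  have hs : 0 < rp ^ 2 := hd.trans_le (sub_le_self _ (sq_nonneg a))
  have hpow : rp ^ (2 * (n + 1)) = (rp ^ 2) ^ ((n : ℝ) + 1) := by
    rw [pow_mul, ← rpow_natCast]; push_cast; rfl
  have hAω : A / ω = (rp ^ 2) ^ ((n : ℝ) + 1) / √d := by
    rw [hA, hpow, mul_div_assoc, mul_div_cancel_left₀ _ hω.ne']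
  have h2n1 : (2 * (n : ℝ) + 1) ≠ 0 := by positivity
  have hmass : m = (rp ^ 2 / d) ^ (((n : ℝ) + 1) / (2 * n + 1)) *
      ((1 : ℝ) / 2 * (A / ω) ^ ((2 * (n : ℝ)) / (2 * n + 1))) := by
    rw [mul_left_comm, hAω, div_rpow_mul_rpow_div_sqrt hs hd (by field_simp; ring)
      (by field_simp; ring), hm, hpow, one_div_mul_eq_div, div_div, mul_comm]
  have hB : 0 < (1 : ℝ) / 2 * (A / ω) ^ ((2 * (n : ℝ)) / (2 * n + 1)) := by
    rw [hAω]; positivity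
  have hx : 1 ≤ rp ^ 2 / d := (one_le_div hd).2 (sub_le_self _ (sq_nonneg a))
  refine ⟨hmass, ?_, ?_⟩
  · rw [hmass]
    exact le_mul_of_one_le_left hB.le (one_le_rpow hx (by positivity))
  · rw [hmass, rpow_mul_eq_self_iff (by positivity) (by positivity) hB.ne',
      div_eq_one_iff_eq hd.ne', eq_comm, sub_eq_self, pow_eq_zero_iff two_ne_zero]

/-- Penrose inequality for the Myers–Perry family: with `m = r₊^(2(n+1))/(2(r₊²−a²))`
and `𝒜 = ω·r₊^(2(n+1))/√(r₊²−a²)`, one has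
`m = (r₊²/(r₊²−a²))^((n+1)/(2n+1))·(1/2)(𝒜/ω)^(2n/(2n+1))`, hence
`m ≥ (1/2)(𝒜/ω)^(2n/(2n+1))` with equality iff `a = 0`. -/
theorem myersPerry_penrose (n : ℕ) (hn : 1 ≤ n) (rp a ω : ℝ) (hrp : 0 < rp)
    (ha : 0 ≤ a) (har : a < rp) (hω : 0 < ω)
    (m A : ℝ) (hm : m = rp ^ (2 * (n + 1)) / (2 * (rp ^ 2 - a ^ 2)))
    (hA : A = ω * rp ^ (2 * (n + 1)) / Real.sqrt (rp ^ 2 - a ^ 2)) :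
    m = (rp ^ 2 / (rp ^ 2 - a ^ 2)) ^ (((n : ℝ) + 1) / (2 * n + 1)) *
        ((1 : ℝ) / 2 * (A / ω) ^ ((2 * (n : ℝ)) / (2 * n + 1))) ∧
    (1 : ℝ) / 2 * (A / ω) ^ ((2 * (n : ℝ)) / (2 * n + 1)) ≤ m ∧
    (m = (1 : ℝ) / 2 * (A / ω) ^ ((2 * (n : ℝ)) / (2 * n + 1)) ↔ a = 0) :=
  myersPerry_penrose_general n rp a ω ha har hω m A hm hA
end

section
/- Let θ : [0,T) → ℝ be continuous with θ(s) > 0 for all s, let F : [0,T) × ℝ → ℝ be continuous, and let v : [0,T) → ℝ be a C¹ solution of (1 − v²)v' + (1 − v²)F(s,v) + θ = 0 with |v(0)| < 1. Then |v(s)| < 1 for all s ∈ [0,T). -/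
/-!
Where `v² = 1` the equation collapses to `θ = 0`, so `θ > 0` forbids `|v| = 1`; since `|v|` is
continuous on the connected interval `[0,T)` and starts below `1`, it stays below `1`.
-/

open Set

theorem abs_ne_one_of_mul_add_mul_add_eq_zero {w a b c : ℝ} (hc : 0 < c)
    (h : (1 - w ^ 2) * a + (1 - w ^ 2) * b + c = 0) : |w| ≠ 1 := by
  intro hw
  have hw2 : w ^ 2 = 1 := by rw [← sq_abs, hw, one_pow]
  rw [hw2] at h
  linarith

theorem IsPreconnected.abs_lt_one_of_abs_ne_one {S : Set ℝ} {g : ℝ → ℝ}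
    (hS : IsPreconnected S) (hg : ContinuousOn g S) {a : ℝ} (ha : a ∈ S) (hga : |g a| < 1)
    (hne : ∀ x ∈ S, |g x| ≠ 1) : ∀ x ∈ S, |g x| < 1 := by
  intro x hx
  by_contra! hgx
  obtain ⟨y, hy, hgy⟩ := hS.intermediate_value ha hx hg.abs ⟨hga.le, hgx⟩
  exact hne y hy hgy

theorem jang_barrier_general (T : ℝ) (θ : ℝ → ℝ) (F : ℝ → ℝ → ℝ)
    (v v' : ℝ → ℝ)
    (hθ : ∀ s ∈ Ico (0 : ℝ) T, 0 < θ s)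
    (hv : ∀ s ∈ Ico (0 : ℝ) T, HasDerivAt v (v' s) s)
    (hODE : ∀ s ∈ Ico (0 : ℝ) T,
      (1 - v s ^ 2) * v' s + (1 - v s ^ 2) * F s (v s) + θ s = 0)
    (h0 : |v 0| < 1) :
    ∀ s ∈ Ico (0 : ℝ) T, |v s| < 1 := by
  intro s hs
  have hvc : ContinuousOn v (Ico 0 T) := fun x hx => (hv x hx).continuousAt.continuousWithinAt
  have hne : ∀ x ∈ Ico (0 : ℝ) T, |v x| ≠ 1 := fun x hx =>
    abs_ne_one_of_mul_add_mul_add_eq_zero (hθ x hx) (hODE x hx)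
  exact isPreconnected_Ico.abs_lt_one_of_abs_ne_one hvc ⟨le_rfl, hs.1.trans_lt hs.2⟩ h0 hne s hs

/-- Barrier estimate for the reduced generalized Jang equation: if `v` is a `C¹` solution of
`(1 − v²)v' + (1 − v²)F(s,v) + θ = 0` on `[0,T)` with `θ > 0` continuous, `F` continuous,
and `|v(0)| < 1`, then `|v(s)| < 1` on `[0,T)`. -/
theorem jang_barrier (T : ℝ) (hT : 0 < T) (θ : ℝ → ℝ) (F : ℝ → ℝ → ℝ)
    (v v' : ℝ → ℝ)
    (hθc : ContinuousOn θ (Ico 0 T)) (hθ : ∀ s ∈ Ico (0 : ℝ) T, 0 < θ s)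
    (hFc : ContinuousOn (fun p : ℝ × ℝ => F p.1 p.2) ((Ico 0 T) ×ˢ (univ : Set ℝ)))
    (hv : ∀ s ∈ Ico (0 : ℝ) T, HasDerivAt v (v' s) s)
    (hv'c : ContinuousOn v' (Ico 0 T))
    (hODE : ∀ s ∈ Ico (0 : ℝ) T,
      (1 - v s ^ 2) * v' s + (1 - v s ^ 2) * F s (v s) + θ s = 0)
    (h0 : |v 0| < 1) :
    ∀ s ∈ Ico (0 : ℝ) T, |v s| < 1 :=
  jang_barrier_general T θ F v v' hθ hv hODE h0
end

section
/- Let θ, F̄ : [0,∞) → ℝ be continuous with θ > 0 and F̄ > 0, and suppose there exists δ > 0 with θ(s)/F̄(s) > δ for all s. Let v : [0,∞) → ℝ be a C¹ function with v(0) < √(1−δ), |v| < 1, satisfying v'(s) ≤ −θ(s)/(1−v(s)²) + F̄(s) whenever v(s) ≥ 0. Then v(s) < √(1−δ) for all s ≥ 0. -/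
/-!
At a time where `v` reaches the level `c = √(1−δ)` we have `1 − v² ≤ δ < θ/F̄`, so the
differential inequality forces `v' < 0` there. A function whose derivative is negative
whenever it sits at a level `c` can never climb from below `c` up to `c`: by the fencing
theorem it stays `≤ c`, and a touching point would be an interior local maximum with
nonzero derivative.
-/

open Set

theorem lt_of_hasDerivAt_of_deriv_neg_at_level {v v' : ℝ → ℝ} {a c : ℝ}
    (hv : ∀ x ∈ Ici a, HasDerivAt v (v' x) x) (ha : v a < c)
    (hlevel : ∀ x ∈ Ici a, v x = c → v' x < 0) : ∀ x ∈ Ici a, v x < c := by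
  have hle : ∀ x ∈ Ici a, v x ≤ c := fun x hx =>
    image_le_of_deriv_right_lt_deriv_boundary (a := a) (b := x) (B := fun _ => c) (B' := 0)
      (fun y hy => (hv y hy.1).continuousAt.continuousWithinAt)
      (fun y hy => (hv y hy.1).hasDerivWithinAt) ha.le (fun _ => hasDerivAt_const _ c)
      (fun y hy => hlevel y hy.1) ⟨hx, le_rfl⟩
  intro x hx
  refine (hle x hx).lt_of_ne fun hvx => (hlevel x hx hvx).ne ?_
  have hax : a < x := hx.lt_of_ne (by rintro rfl; exact ha.ne hvx)
  have hmax : IsLocalMax v x :=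
    Filter.mem_of_superset (Ici_mem_nhds hax) fun y hy => hvx ▸ hle y hy
  exact hmax.hasDerivAt_eq_zero (hv x hx)

theorem neg_div_add_neg_of_mul_lt {θ F δ w : ℝ} (hF : 0 < F) (hθ : δ * F < θ)
    (hw : 0 < w) (hwδ : w ≤ δ) : -θ / w + F < 0 := by
  have hwF : w * F < θ := (mul_le_mul_of_nonneg_right hwδ hF.le).trans_lt hθ
  have hFθ : F < θ / w := (lt_div_iff₀ hw).mpr (by linarith)
  linarith [neg_div w θ]

theorem jang_improved_barrier_general (θ Fbar : ℝ → ℝ) (δ : ℝ)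
    (hF : ∀ s ∈ Ici (0 : ℝ), 0 < Fbar s)
    (hratio : ∀ s ∈ Ici (0 : ℝ), δ < θ s / Fbar s)
    (v v' : ℝ → ℝ) (hv : ∀ s ∈ Ici (0 : ℝ), HasDerivAt v (v' s) s)
    (h0 : v 0 < Real.sqrt (1 - δ)) (hv1 : ∀ s ∈ Ici (0 : ℝ), |v s| < 1)
    (hineq : ∀ s ∈ Ici (0 : ℝ), 0 ≤ v s →
      v' s ≤ -θ s / (1 - v s ^ 2) + Fbar s) :
    ∀ s ∈ Ici (0 : ℝ), v s < Real.sqrt (1 - δ) := by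
  refine lt_of_hasDerivAt_of_deriv_neg_at_level hv h0 fun s hs hvs => ?_
  have hgap_pos : 0 < 1 - v s ^ 2 := by
    nlinarith [abs_lt.mp (hv1 s hs)]
  have hgap_le : 1 - v s ^ 2 ≤ δ := by
    rw [hvs, Real.sq_sqrt']
    linarith [le_max_left (1 - δ) 0]
  have hθ : δ * Fbar s < θ s := (lt_div_iff₀ (hF s hs)).mp (hratio s hs)
  exact (hineq s hs (hvs ▸ Real.sqrt_nonneg _)).trans_lt
    (neg_div_add_neg_of_mul_lt (hF s hs) hθ hgap_pos hgap_le)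

/-- Improved barrier estimate: if `θ, F̄ > 0` are continuous on `[0,∞)` with
`θ/F̄ > δ > 0`, and a `C¹` function `v` with `v(0) < √(1−δ)`, `|v| < 1` satisfies
`v' ≤ −θ/(1−v²) + F̄` whenever `v ≥ 0`, then `v < √(1−δ)` everywhere on `[0,∞)`. -/
theorem jang_improved_barrier (θ Fbar : ℝ → ℝ) (δ : ℝ) (hδ : 0 < δ)
    (hθc : ContinuousOn θ (Ici 0)) (hFc : ContinuousOn Fbar (Ici 0))
    (hθ : ∀ s ∈ Ici (0 : ℝ), 0 < θ s) (hF : ∀ s ∈ Ici (0 : ℝ), 0 < Fbar s)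
    (hratio : ∀ s ∈ Ici (0 : ℝ), δ < θ s / Fbar s)
    (v v' : ℝ → ℝ) (hv : ∀ s ∈ Ici (0 : ℝ), HasDerivAt v (v' s) s)
    (hv'c : ContinuousOn v' (Ici 0))
    (h0 : v 0 < Real.sqrt (1 - δ)) (hv1 : ∀ s ∈ Ici (0 : ℝ), |v s| < 1)
    (hineq : ∀ s ∈ Ici (0 : ℝ), 0 ≤ v s →
      v' s ≤ -θ s / (1 - v s ^ 2) + Fbar s) :
    ∀ s ∈ Ici (0 : ℝ), v s < Real.sqrt (1 - δ) :=
  jang_improved_barrier_general θ Fbar δ hF hratio v v' hv h0 hv1 hineq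
end

section
/- Let n ≥ 1 be an integer, ρ : [0,∞) → (0,∞) a C¹ function with ρ(s) = s + O(s^(1−τ)) and ρ'(s) → 1 as s → ∞ for some τ > n, and let v be a solution on [s₀,∞) of v' + ((2n+1)/((1−v²)s))·v = g(s), where |g(s)| ≤ C₁(s^(−2τ−1) + s^(−τ−1)|v(s)|) and |v| ≤ √(1−δ) for some δ > 0. Then for every τ₀ < min{τ, n + 1/2} there is a constant C with |v(s)| ≤ C·s^(−2τ₀) for all s ≥ s₀. -/
/-! The coefficient `(2n+1)/((1-v²)s)` is at least `c/s` with `c = 2n+1`, so the integrating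
factor `exp ∫ (2n+1)/((1-v²)s)` grows at least like `s^c`, and variation of constants turns forcing
of size `s^(-α-1)` with `α < c` into decay `s^(-α)` of `v`. Starting from `|v| < 1` the forcing is
`O(s^(-τ₀-1))`, so `v = O(s^(-τ₀))`; fed back, the forcing improves to `O(s^(-2τ₀-1))`, and since
`2τ₀ < 2n+1` this gives `v = O(s^(-2τ₀))`. -/

open Set

theorem rpow_le_rpow_mul_rpow_of_le {s₀ s e₁ e₂ : ℝ} (hs₀ : 0 < s₀) (hs : s₀ ≤ s) (he : e₁ ≤ e₂) :
    s ^ e₁ ≤ s₀ ^ (e₁ - e₂) * s ^ e₂ := by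
  have hsp : 0 < s := hs₀.trans_le hs
  calc s ^ e₁ = s ^ (e₁ - e₂) * s ^ e₂ := by rw [← Real.rpow_add hsp]; ring_nf
    _ ≤ s₀ ^ (e₁ - e₂) * s ^ e₂ :=
      mul_le_mul_of_nonneg_right (Real.rpow_le_rpow_of_nonpos hs₀ hs (by linarith)) (by positivity)

theorem nonneg_of_abs_le_mul {x K y : ℝ} (h : |x| ≤ K * y) (hy : 0 < y) : 0 ≤ K :=
  nonneg_of_mul_nonneg_left ((abs_nonneg x).trans h) hy

noncomputable def integratingFactor (a : ℝ → ℝ) (s₀ s : ℝ) : ℝ :=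
  Real.exp (∫ t in s₀..s, a t)

section IntegratingFactor

variable {a : ℝ → ℝ} {s₀ s : ℝ}

@[simp]
theorem integratingFactor_self : integratingFactor a s₀ s₀ = 1 := by
  simp [integratingFactor]

theorem integratingFactor_pos : 0 < integratingFactor a s₀ s :=
  Real.exp_pos _

theorem hasDerivAt_integratingFactor (ha : Continuous a) :
    HasDerivAt (integratingFactor a s₀) (a s * integratingFactor a s₀ s) s :=
  ((ha.integral_hasStrictDerivAt s₀ s).hasDerivAt.exp).congr_deriv (mul_comm _ _)

theorem rpow_div_le_integratingFactor {c : ℝ} (ha : Continuous a) (hs₀ : 0 < s₀) (hs : s₀ ≤ s)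
    (ha_lb : ∀ t ∈ Icc s₀ s, c / t ≤ a t) : (s / s₀) ^ c ≤ integratingFactor a s₀ s := by
  have hne : ∀ t ∈ uIcc s₀ s, t ≠ 0 := fun t ht =>
    (hs₀.trans_le (uIcc_of_le hs ▸ ht).1).ne'
  have hinv : IntervalIntegrable (fun t => t⁻¹) MeasureTheory.volume s₀ s :=
    intervalIntegral.intervalIntegrable_inv hne continuousOn_id
  have hint : c * Real.log (s / s₀) ≤ ∫ t in s₀..s, a t := by
    rw [← integral_inv_of_pos hs₀ (hs₀.trans_le hs), ← intervalIntegral.integral_const_mul]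
    exact intervalIntegral.integral_mono_on hs (hinv.const_mul c) (ha.intervalIntegrable _ _)
      fun t ht => by simpa [div_eq_mul_inv] using ha_lb t ht
  rw [Real.rpow_def_of_pos (div_pos (hs₀.trans_le hs) hs₀), mul_comm]
  exact Real.exp_le_exp.2 hint

theorem integratingFactor_inv_le {c α : ℝ} (ha : Continuous a) (hs₀ : 0 < s₀) (hs : s₀ ≤ s)
    (ha_lb : ∀ t ∈ Icc s₀ s, c / t ≤ a t) (hα : α ≤ c) :
    (integratingFactor a s₀ s)⁻¹ ≤ s₀ ^ α * s ^ (-α) := by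
  have hsp : 0 < s := hs₀.trans_le hs
  have hgrowth : (s / s₀) ^ α ≤ integratingFactor a s₀ s :=
    (Real.rpow_le_rpow_of_exponent_le ((one_le_div hs₀).2 hs) hα).trans
      (rpow_div_le_integratingFactor ha hs₀ hs ha_lb)
  calc (integratingFactor a s₀ s)⁻¹ ≤ ((s / s₀) ^ α)⁻¹ := inv_anti₀ (by positivity) hgrowth
    _ = s₀ ^ α * s ^ (-α) := by
      rw [Real.div_rpow hsp.le hs₀.le, Real.rpow_neg hsp.le, inv_div, div_eq_mul_inv]

/-- Variation of constants: `(v E)' = g E`, and `|g E|` is dominated by the derivative of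
`K / (c - α) · s ^ (-α) E(s)` because `a s ≥ c / s` and `α < c`. -/
theorem abs_mul_integratingFactor_le {c α K : ℝ} {v v' g : ℝ → ℝ} (ha : Continuous a)
    (hs₀ : 0 < s₀) (hs : s₀ ≤ s) (ha_lb : ∀ t ≥ s₀, c / t ≤ a t)
    (hv : ∀ t ≥ s₀, HasDerivAt v (v' t) t)
    (hode : ∀ t ≥ s₀, v' t = g t - a t * v t) (hα : α < c) (hK : 0 ≤ K)
    (hg : ∀ t ≥ s₀, |g t| ≤ K * t ^ (-α - 1)) :
    |v s| * integratingFactor a s₀ s ≤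
      |v s₀| + K / (c - α) * (s ^ (-α) * integratingFactor a s₀ s) := by
  set E := integratingFactor a s₀
  set q := K / (c - α)
  have hq : 0 ≤ q := div_nonneg hK (sub_pos.2 hα).le
  have hvE : ∀ t ≥ s₀, HasDerivAt (fun t => v t * E t) (g t * E t) t := by
    intro t ht
    exact ((hv t ht).mul (hasDerivAt_integratingFactor ha)).congr_deriv (by rw [hode t ht]; ring)
  have hχ : ∀ t ≥ s₀, HasDerivAt (fun t => |v s₀| + q * (t ^ (-α) * E t))
      (q * (t ^ (-α - 1) * E t) * (a t * t - α)) t := by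
    intro t ht
    have htp : 0 < t := hs₀.trans_le ht
    have hpow : t ^ (-α) = t ^ (-α - 1) * t := by rw [← Real.rpow_add_one htp.ne']; ring_nf
    exact ((((Real.hasDerivAt_rpow_const (Or.inl htp.ne')).mul
      (hasDerivAt_integratingFactor ha)).const_mul q).const_add |v s₀|).congr_deriv
      (by rw [hpow]; ring)
  have hbound : ∀ t ≥ s₀, |g t * E t| ≤ q * (t ^ (-α - 1) * E t) * (a t * t - α) := by
    intro t ht
    have htp : 0 < t := hs₀.trans_le ht
    have hat : c ≤ a t * t := (div_le_iff₀ htp).1 (ha_lb t ht)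
    calc |g t * E t| = |g t| * E t := by rw [abs_mul, abs_of_pos integratingFactor_pos]
      _ ≤ K * t ^ (-α - 1) * E t := mul_le_mul_of_nonneg_right (hg t ht) integratingFactor_pos.le
      _ = q * (t ^ (-α - 1) * E t) * (c - α) := by
        rw [← div_mul_cancel₀ K (sub_pos.2 hα).ne']
        ring
      _ ≤ q * (t ^ (-α - 1) * E t) * (a t * t - α) :=
        mul_le_mul_of_nonneg_left (by linarith)
          (mul_nonneg hq (mul_nonneg (Real.rpow_nonneg htp.le _) integratingFactor_pos.le))
  have key := image_norm_le_of_norm_deriv_right_le_deriv_boundary'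
    (f := fun t => v t * E t) (fun t ht => (hvE t ht.1).continuousAt.continuousWithinAt)
    (fun t ht => (hvE t ht.1).hasDerivWithinAt) (B := fun t => |v s₀| + q * (t ^ (-α) * E t))
    (by simpa [E] using mul_nonneg hq (Real.rpow_nonneg hs₀.le (-α)))
    (fun t ht => (hχ t ht.1).continuousAt.continuousWithinAt)
    (fun t ht => (hχ t ht.1).hasDerivWithinAt) (fun t ht => hbound t ht.1) ⟨hs, le_rfl⟩
  have hEs : 0 < E s := integratingFactor_pos
  simpa [Real.norm_eq_abs, abs_mul, abs_of_pos hEs] using key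

end IntegratingFactor

theorem abs_le_mul_rpow_of_hasDerivAt {s₀ c α K : ℝ} {a v v' g : ℝ → ℝ} (hs₀ : 0 < s₀)
    (ha : ContinuousOn a (Ici s₀)) (ha_lb : ∀ s ≥ s₀, c / s ≤ a s)
    (hv : ∀ s ≥ s₀, HasDerivAt v (v' s) s) (hode : ∀ s ≥ s₀, v' s = g s - a s * v s)
    (hα : α < c) (hg : ∀ s ≥ s₀, |g s| ≤ K * s ^ (-α - 1)) :
    ∀ s ≥ s₀, |v s| ≤ (|v s₀| * s₀ ^ α + K / (c - α)) * s ^ (-α) := by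
  intro s hs
  -- a continuous extension of `a` to all of `ℝ`, so that `∫ₛ₀ˢ b` is differentiable everywhere
  set b : ℝ → ℝ := fun t => a (max t s₀)
  have hb : Continuous b :=
    ha.comp_continuous (continuous_id.max continuous_const) fun t => le_max_right t s₀
  have hba : ∀ t ≥ s₀, b t = a t := fun t ht => by simp only [b, max_eq_left ht]
  have hb_lb : ∀ t ≥ s₀, c / t ≤ b t := fun t ht => hba t ht ▸ ha_lb t ht
  have hK : 0 ≤ K := nonneg_of_abs_le_mul (hg s₀ le_rfl) (Real.rpow_pos_of_pos hs₀ _)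
  set E := integratingFactor b s₀
  have hE : 0 < E s := integratingFactor_pos
  have hvE := abs_mul_integratingFactor_le hb hs₀ hs hb_lb hv
    (fun t ht => hba t ht ▸ hode t ht) hα hK hg
  have hEinv := integratingFactor_inv_le hb hs₀ hs (fun t ht => hb_lb t ht.1) hα.le
  calc |v s| = |v s| * E s * (E s)⁻¹ := by field_simp
    _ ≤ (|v s₀| + K / (c - α) * (s ^ (-α) * E s)) * (E s)⁻¹ :=
      mul_le_mul_of_nonneg_right hvE (inv_nonneg.2 hE.le)
    _ = |v s₀| * (E s)⁻¹ + K / (c - α) * s ^ (-α) := by field_simp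
    _ ≤ |v s₀| * (s₀ ^ α * s ^ (-α)) + K / (c - α) * s ^ (-α) := by gcongr
    _ = (|v s₀| * s₀ ^ α + K / (c - α)) * s ^ (-α) := by ring

theorem exists_abs_le_mul_rpow_of_abs_le {s₀ τ β γ B C₁ : ℝ} {v g : ℝ → ℝ} (hs₀ : 0 < s₀)
    (hg : ∀ s ≥ s₀, |g s| ≤ C₁ * (s ^ (-2 * τ - 1) + s ^ (-τ - 1) * |v s|))
    (hv : ∀ s ≥ s₀, |v s| ≤ B * s ^ (-β)) (hγτ : γ ≤ 2 * τ) (hγβ : γ ≤ τ + β) :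
    ∃ K, ∀ s ≥ s₀, |g s| ≤ K * s ^ (-γ - 1) := by
  have hB : 0 ≤ B := nonneg_of_abs_le_mul (hv s₀ le_rfl) (Real.rpow_pos_of_pos hs₀ _)
  have hC₁ : 0 ≤ C₁ := nonneg_of_abs_le_mul (hg s₀ le_rfl) (by positivity)
  refine ⟨C₁ * (s₀ ^ (-2 * τ - 1 - (-γ - 1)) + B * s₀ ^ (-τ - 1 - β - (-γ - 1))), fun s hs => ?_⟩
  have hsp : 0 < s := hs₀.trans_le hs
  calc |g s| ≤ C₁ * (s ^ (-2 * τ - 1) + s ^ (-τ - 1) * |v s|) := hg s hs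
    _ ≤ C₁ * (s ^ (-2 * τ - 1) + B * s ^ (-τ - 1 - β)) := by
      rw [sub_eq_add_neg _ β, Real.rpow_add hsp, mul_left_comm]
      gcongr
      exact hv s hs
    _ ≤ C₁ * (s₀ ^ (-2 * τ - 1 - (-γ - 1)) * s ^ (-γ - 1)
          + B * (s₀ ^ (-τ - 1 - β - (-γ - 1)) * s ^ (-γ - 1))) := by
      gcongr
      · exact rpow_le_rpow_mul_rpow_of_le hs₀ hs (by linarith)
      · exact rpow_le_rpow_mul_rpow_of_le hs₀ hs (by linarith)
    _ = _ := by ring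

theorem jang_polynomial_decay_general (n : ℕ) (τ : ℝ) (hτ : (n : ℝ) < τ)
    (s₀ : ℝ) (hs₀ : 0 < s₀)
    (v v' g : ℝ → ℝ) (C₁ δ : ℝ) (hδ : 0 < δ)
    (hv : ∀ s ≥ s₀, HasDerivAt v (v' s) s)
    (hODE : ∀ s ≥ s₀, v' s + (2 * (n : ℝ) + 1) / ((1 - v s ^ 2) * s) * v s = g s)
    (hg : ∀ s ≥ s₀, |g s| ≤ C₁ * (s ^ (-2 * τ - 1) + s ^ (-τ - 1) * |v s|))
    (hvb : ∀ s ≥ s₀, |v s| ≤ Real.sqrt (1 - δ)) :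
    ∀ τ₀ : ℝ, τ₀ < min τ ((n : ℝ) + 1 / 2) →
      ∃ C : ℝ, ∀ s ≥ s₀, |v s| ≤ C * s ^ (-2 * τ₀) := by
  intro τ₀ hτ₀
  obtain ⟨hτ₀τ, hτ₀n⟩ := lt_min_iff.1 hτ₀
  have hn : (0 : ℝ) ≤ n := n.cast_nonneg
  have hv1 : ∀ s ≥ s₀, |v s| < 1 := fun s hs =>
    (hvb s hs).trans_lt ((Real.sqrt_lt' one_pos).2 (by linarith))
  have hsq : ∀ s ≥ s₀, 0 < 1 - v s ^ 2 := fun s hs =>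
    sub_pos.2 ((sq_lt_one_iff_abs_lt_one _).2 (hv1 s hs))
  have ha : ContinuousOn (fun s => (2 * (n : ℝ) + 1) / ((1 - v s ^ 2) * s)) (Ici s₀) := by
    have hvc : ContinuousOn v (Ici s₀) := fun s hs => (hv s hs).continuousAt.continuousWithinAt
    exact continuousOn_const.div ((continuousOn_const.sub (hvc.pow 2)).mul continuousOn_id)
      fun s hs => (mul_pos (hsq s hs) (hs₀.trans_le hs)).ne'
  have ha_lb : ∀ s ≥ s₀, (2 * (n : ℝ) + 1) / s ≤ (2 * (n : ℝ) + 1) / ((1 - v s ^ 2) * s) :=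
    fun s hs => div_le_div_of_nonneg_left (by positivity) (mul_pos (hsq s hs) (hs₀.trans_le hs))
      (mul_le_of_le_one_left (hs₀.trans_le hs).le (by nlinarith))
  have hode : ∀ s ≥ s₀, v' s = g s - (2 * (n : ℝ) + 1) / ((1 - v s ^ 2) * s) * v s :=
    fun s hs => by linarith [hODE s hs]
  obtain ⟨K₁, hg₁⟩ := exists_abs_le_mul_rpow_of_abs_le (β := 0) (B := 1) (γ := τ₀) hs₀ hg
    (fun s hs => by simpa using (hv1 s hs).le) (by linarith) (by linarith)
  have hv₁ := abs_le_mul_rpow_of_hasDerivAt hs₀ ha ha_lb hv hode (by linarith) hg₁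
  obtain ⟨K₂, hg₂⟩ := exists_abs_le_mul_rpow_of_abs_le (γ := 2 * τ₀) hs₀ hg hv₁
    (by linarith) (by linarith)
  have hv₂ := abs_le_mul_rpow_of_hasDerivAt hs₀ ha ha_lb hv hode (by linarith) hg₂
  exact ⟨_, fun s hs => neg_mul 2 τ₀ ▸ hv₂ s hs⟩

/-- Polynomial decay for the reduced generalized Jang equation in an asymptotically flat
end: if `v' + ((2n+1)/((1−v²)s))v = g` on `[s₀,∞)` with `|g| ≤ C₁(s^(−2τ−1)+s^(−τ−1)|v|)`
and `|v| ≤ √(1−δ)`, then `|v(s)| ≤ C·s^(−2τ₀)` for any `τ₀ < min{τ, n+1/2}`. -/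
theorem jang_polynomial_decay (n : ℕ) (hn : 1 ≤ n) (τ : ℝ) (hτ : (n : ℝ) < τ)
    (s₀ : ℝ) (hs₀ : 0 < s₀) (ρ : ℝ → ℝ)
    (hρ1 : ∀ s, 0 < ρ s) (hρC1 : ContDiff ℝ 1 ρ)
    (hρasym : ∃ Cρ : ℝ, ∀ s ≥ s₀, |ρ s - s| ≤ Cρ * s ^ (1 - τ))
    (hρ' : Filter.Tendsto (deriv ρ) Filter.atTop (nhds 1))
    (v v' g : ℝ → ℝ) (C₁ δ : ℝ) (hδ : 0 < δ)
    (hv : ∀ s ≥ s₀, HasDerivAt v (v' s) s)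
    (hODE : ∀ s ≥ s₀, v' s + (2 * (n : ℝ) + 1) / ((1 - v s ^ 2) * s) * v s = g s)
    (hg : ∀ s ≥ s₀, |g s| ≤ C₁ * (s ^ (-2 * τ - 1) + s ^ (-τ - 1) * |v s|))
    (hvb : ∀ s ≥ s₀, |v s| ≤ Real.sqrt (1 - δ)) :
    ∀ τ₀ : ℝ, τ₀ < min τ ((n : ℝ) + 1 / 2) →
      ∃ C : ℝ, ∀ s ≥ s₀, |v s| ≤ C * s ^ (-2 * τ₀) :=
  jang_polynomial_decay_general n τ hτ s₀ hs₀ v v' g C₁ δ hδ hv hODE hg hvb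
end

section
/- Let n ≥ 1, ρ, B : [s₀,∞) → ℝ smooth with ρ(s) = sinh s + O₂(e^((1−q)s)) and B(s) = O₂(e^(−qs)) for some q > n+1. Then the difference between (1/2)(sinh s)^(2n)[1 − γ(s)(ρ²/sinh²s − 2ρ²cosh²s/sinh²s + 2ρρ'cosh s/sinh s)] and (1/2)(sinh s)^(2n)(1 + ρ² − ρ'²) tends to 0 as s → ∞, where γ(s) = (e^(−4nB) + 2n e^(2B))/(2n+1). -/
open Filter Real

lemma key_identity (r r' g σ c : ℝ) (hσ : σ ≠ 0) (hc : c^2 = 1 + σ^2) :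
    1 - g * (r^2/σ^2 - 2*r^2*c^2/σ^2 + 2*r*r'*c/σ) - (1 + r^2 - r'^2)
      = (r' - r*c/σ)^2 - (g-1) * (r^2/σ^2 - 2*r^2*c^2/σ^2 + 2*r*r'*c/σ) := by
  field_simp
  linear_combination (r^2) * hc

set_option maxHeartbeats 1000000 in
lemma bound_aux (n : ℕ) (C q s r r' b : ℝ) (hn1 : 1 ≤ (n:ℝ)) (hC : 0 ≤ C) (hqpos : 0 < q)
    (hs1 : 1 ≤ s)
    (ha : |r - Real.sinh s| ≤ C * Real.exp ((1-q)*s))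
    (ha' : |r' - Real.cosh s| ≤ C * Real.exp ((1-q)*s))
    (hbB : |b| ≤ C * Real.exp (-q*s))
    (hbsmall : (4*(n:ℝ)+1) * |b| ≤ 1) :
    |(1 : ℝ) / 2 * (Real.sinh s) ^ (2 * n) *
          (1 - (Real.exp (-(4 * (n : ℝ) * b)) + 2 * (n : ℝ) * Real.exp (2 * b)) /
              (2 * (n : ℝ) + 1) *
            (r ^ 2 / (Real.sinh s) ^ 2 - 2 * r ^ 2 * (Real.cosh s) ^ 2 / (Real.sinh s) ^ 2
              + 2 * r * r' * Real.cosh s / Real.sinh s)) -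
        (1 : ℝ) / 2 * (Real.sinh s) ^ (2 * n) * (1 + r ^ 2 - r' ^ 2)|
      ≤ (1/2 * (16*C^2 + 36*(16*(n:ℝ)^2+8*(n:ℝ))*C^2*(1+C)^2))
          * Real.exp ((2*(n:ℝ)+2-2*q)*s) := by
  have hspos : (0:ℝ) < s := by linarith
  set M : ℝ := 16*(n:ℝ)^2 + 8*(n:ℝ) with hM
  have hMnn : 0 ≤ M := by positivity
  set E : ℝ := Real.exp s with hE
  have hEpos : 0 < E := Real.exp_pos s
  set σ : ℝ := Real.sinh s with hσdef
  set c : ℝ := Real.cosh s with hcdef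
  have hσpos : 0 < σ := Real.sinh_pos_iff.mpr hspos
  have hσne : σ ≠ 0 := ne_of_gt hσpos
  have hcosh_sq : c^2 = 1 + σ^2 := by rw [hcdef, hσdef, Real.cosh_sq']
  have hcpos : 0 < c := Real.cosh_pos s
  have hupos : 0 < Real.exp (-s) := Real.exp_pos _
  have hexpneg : Real.exp (-s) * E = 1 := by
    rw [hE, ← Real.exp_add]; simp
  have hexpneg_le : Real.exp (-s) ≤ 1 := by
    rw [Real.exp_le_one_iff]; linarith
  have hE2 : 2 ≤ E := by
    rw [hE]; linarith [Real.add_one_le_exp s]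
  have hσle : σ ≤ E := by
    rw [hσdef, Real.sinh_eq, ← hE]; linarith
  have hcle : c ≤ E := by
    rw [hcdef, Real.cosh_eq, ← hE]; linarith
  have hEσ : E ≤ 3 * σ := by
    rw [hσdef, Real.sinh_eq, ← hE]
    have h1 : 0 ≤ (E - 2) * Real.exp (-s) :=
      mul_nonneg (by linarith) (le_of_lt hupos)
    nlinarith [hexpneg]
  set e₁ : ℝ := Real.exp ((1-q)*s) with he₁
  have he₁pos : 0 < e₁ := Real.exp_pos _
  have he₁E : e₁ ≤ E := by
    rw [he₁, hE]
    apply Real.exp_le_exp.mpr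
    nlinarith [mul_nonneg (le_of_lt hqpos) (le_of_lt hspos)]
  -- gamma - 1 bound
  set g : ℝ := (Real.exp (-(4 * (n:ℝ) * b)) + 2 * (n:ℝ) * Real.exp (2 * b)) / (2 * (n:ℝ) + 1)
    with hg
  have hgb : |g - 1| ≤ M * b^2 := by
    have habs_b : 0 ≤ |b| := abs_nonneg b
    have hx1 : |(-(4 * (n:ℝ) * b))| ≤ 1 := by
      rw [abs_neg, abs_mul, abs_of_nonneg (by positivity : (0:ℝ) ≤ 4*(n:ℝ))]
      nlinarith
    have hx2 : |(2*b)| ≤ 1 := by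
      rw [abs_mul, abs_of_nonneg (by norm_num : (0:ℝ) ≤ 2)]
      nlinarith
    have h1 := Real.abs_exp_sub_one_sub_id_le hx1
    have h2 := Real.abs_exp_sub_one_sub_id_le hx2
    have hgeq : g - 1 = ((Real.exp (-(4*(n:ℝ)*b)) - 1 - (-(4*(n:ℝ)*b)))
        + 2*(n:ℝ) * (Real.exp (2*b) - 1 - 2*b)) / (2*(n:ℝ)+1) := by
      rw [hg]; field_simp; ring
    have hpos : (0:ℝ) < 2*(n:ℝ)+1 := by positivity
    rw [hgeq, abs_div, abs_of_pos hpos]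
    have hnum : |Real.exp (-(4*(n:ℝ)*b)) - 1 - (-(4*(n:ℝ)*b))
        + 2*(n:ℝ) * (Real.exp (2*b) - 1 - 2*b)| ≤ M * b^2 := by
      calc |Real.exp (-(4*(n:ℝ)*b)) - 1 - (-(4*(n:ℝ)*b))
          + 2*(n:ℝ) * (Real.exp (2*b) - 1 - 2*b)|
          ≤ |Real.exp (-(4*(n:ℝ)*b)) - 1 - (-(4*(n:ℝ)*b))|
            + |2*(n:ℝ) * (Real.exp (2*b) - 1 - 2*b)| := abs_add_le _ _
        _ ≤ (-(4*(n:ℝ)*b))^2 + 2*(n:ℝ) * (2*b)^2 := by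
            rw [abs_mul, abs_of_nonneg (by positivity : (0:ℝ) ≤ 2*(n:ℝ))]
            have := mul_le_mul_of_nonneg_left h2 (by positivity : (0:ℝ) ≤ 2*(n:ℝ))
            linarith
        _ = M * b^2 := by rw [hM]; ring
    calc |Real.exp (-(4*(n:ℝ)*b)) - 1 - (-(4*(n:ℝ)*b))
        + 2*(n:ℝ) * (Real.exp (2*b) - 1 - 2*b)| / (2*(n:ℝ)+1)
        ≤ (M * b^2) / (2*(n:ℝ)+1) := by
          apply div_le_div_of_nonneg_right hnum (le_of_lt hpos)
      _ ≤ M * b^2 := div_le_self (by positivity) (by linarith)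
  have hgb' : |g - 1| ≤ M * (C * Real.exp (-q*s))^2 := by
    have hb2 : b^2 ≤ (C * Real.exp (-q*s))^2 := by
      rw [← sq_abs b]
      exact pow_le_pow_left₀ (abs_nonneg b) hbB 2
    calc |g - 1| ≤ M * b^2 := hgb
      _ ≤ M * (C * Real.exp (-q*s))^2 := mul_le_mul_of_nonneg_left hb2 hMnn
  -- bounds on r, r'
  have hrle : |r| ≤ (1+C) * E := by
    have h1 : C * e₁ ≤ C * E := mul_le_mul_of_nonneg_left he₁E hC
    calc |r| = |σ + (r - σ)| := by ring_nf
      _ ≤ |σ| + |r - σ| := abs_add_le _ _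
      _ ≤ E + C * e₁ := by rw [abs_of_pos hσpos]; exact add_le_add hσle ha
      _ ≤ (1+C) * E := by linarith
  have hr'le : |r'| ≤ (1+C) * E := by
    have h1 : C * e₁ ≤ C * E := mul_le_mul_of_nonneg_left he₁E hC
    calc |r'| = |c + (r' - c)| := by ring_nf
      _ ≤ |c| + |r' - c| := abs_add_le _ _
      _ ≤ E + C * e₁ := by rw [abs_of_pos hcpos]; exact add_le_add hcle ha'
      _ ≤ (1+C) * E := by linarith
  -- bound on T
  set T : ℝ := r' - r * c / σ with hT
  have hTbound : |T| ≤ 4 * C * e₁ := by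
    have hTeq : T = (r' - c) + (σ - r) * (c/σ) := by
      rw [hT]; field_simp; ring
    have hcσ : c/σ ≤ 3 := by
      rw [div_le_iff₀ hσpos]; linarith
    have hcσ0 : 0 ≤ c/σ := le_of_lt (div_pos hcpos hσpos)
    have h1 : |σ - r| ≤ C * e₁ := by rw [abs_sub_comm]; exact ha
    have h2 : |c/σ| ≤ 3 := by rw [abs_of_nonneg hcσ0]; exact hcσ
    have h3 := mul_le_mul h1 h2 (abs_nonneg _) (by positivity)
    calc |T| = |(r' - c) + (σ - r) * (c/σ)| := by rw [hTeq]
      _ ≤ |r' - c| + |σ - r| * |c/σ| := by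
          refine (abs_add_le _ _).trans ?_
          rw [abs_mul]
      _ ≤ C * e₁ + (C * e₁) * 3 := by linarith
      _ = 4 * C * e₁ := by ring
  have hT2 : T^2 ≤ 16*C^2*e₁^2 := by
    have := pow_le_pow_left₀ (abs_nonneg T) hTbound 2
    calc T^2 = |T|^2 := (sq_abs T).symm
      _ ≤ (4*C*e₁)^2 := this
      _ = 16*C^2*e₁^2 := by ring
  -- bound on X
  set X : ℝ := r^2/σ^2 - 2*r^2*c^2/σ^2 + 2*r*r'*c/σ with hX
  have hXbound : |X| ≤ 36*(1+C)^2 * E^2 := by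
    have hXeq : X = (r^2*(1 - 2*c^2) + 2*r*r'*c*σ) / σ^2 := by
      rw [hX]; field_simp
    rw [hXeq, abs_div, abs_of_pos (by positivity : (0:ℝ) < σ^2),
      div_le_iff₀ (by positivity : (0:ℝ) < σ^2)]
    have hc1 : 1 ≤ c := by rw [hcdef]; exact Real.one_le_cosh s
    have hcE2 : c^2 ≤ E^2 := pow_le_pow_left₀ (le_of_lt hcpos) hcle 2
    have h1 : r^2 ≤ ((1+C)*E)^2 := by
      rw [← sq_abs r]; exact pow_le_pow_left₀ (abs_nonneg r) hrle 2
    have h2 : 2*c^2 - 1 ≤ 2*E^2 := by linarith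
    have h6 : 0 ≤ 2*c^2 - 1 := by nlinarith
    have hfact1 : r^2 * (2*c^2 - 1) ≤ ((1+C)*E)^2 * (2*E^2) :=
      mul_le_mul h1 h2 h6 (by positivity)
    have h3 : |r| * |r'| ≤ ((1+C)*E)*((1+C)*E) :=
      mul_le_mul hrle hr'le (abs_nonneg _) (by positivity)
    have h4 : c*σ ≤ E*E := mul_le_mul hcle hσle (le_of_lt hσpos) (le_of_lt hEpos)
    have hfact2 : (|r| * |r'|) * (c*σ) ≤ (((1+C)*E)*((1+C)*E)) * (E*E) :=
      mul_le_mul h3 h4 (by positivity) (by positivity)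
    have hσ2 : E^2 ≤ 9*σ^2 := by
      have := pow_le_pow_left₀ (le_of_lt hEpos) hEσ 2
      calc E^2 ≤ (3*σ)^2 := this
        _ = 9*σ^2 := by ring
    have hfact3 : (4*(1+C)^2*E^2) * E^2 ≤ (4*(1+C)^2*E^2) * (9*σ^2) :=
      mul_le_mul_of_nonneg_left hσ2 (by positivity)
    calc |r^2*(1 - 2*c^2) + 2*r*r'*c*σ|
        ≤ |r^2*(1 - 2*c^2)| + |2*r*r'*c*σ| := abs_add_le _ _
      _ = r^2*(2*c^2 - 1) + 2 * |r| * |r'| * c * σ := by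
          rw [abs_mul, abs_mul, abs_mul, abs_mul, abs_mul]
          rw [abs_of_nonpos (by linarith : 1 - 2*c^2 ≤ 0),
            abs_of_nonneg (by positivity : (0:ℝ) ≤ r^2),
            abs_of_pos hcpos, abs_of_pos hσpos,
            abs_of_nonneg (by norm_num : (0:ℝ) ≤ 2)]
          ring
      _ ≤ ((1+C)*E)^2*(2*E^2) + 2*((((1+C)*E)*((1+C)*E)) * (E*E)) := by linarith
      _ = (4*(1+C)^2*E^2) * E^2 := by ring
      _ ≤ (4*(1+C)^2*E^2) * (9*σ^2) := hfact3
      _ = 36*(1+C)^2 * E^2 * σ^2 := by ring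
  -- key identity
  have hid : (1 : ℝ) / 2 * σ ^ (2 * n) * (1 - g * X)
      - (1 : ℝ) / 2 * σ ^ (2 * n) * (1 + r ^ 2 - r' ^ 2)
      = (1 : ℝ) / 2 * σ ^ (2 * n) * (T^2 - (g-1) * X) := by
    have h := key_identity r r' g σ c hσne hcosh_sq
    rw [hT, hX]
    linear_combination ((1:ℝ)/2 * σ^(2*n)) * h
  -- exponential bookkeeping
  have hprod1 : E^(2*n) * e₁^2 = Real.exp ((2*(n:ℝ)+2-2*q)*s) := by
    rw [hE, he₁, ← Real.exp_nat_mul, ← Real.exp_nat_mul, ← Real.exp_add]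
    congr 1
    push_cast
    ring
  have hprod2 : E^(2*n) * (Real.exp (-q*s))^2 * E^2 = Real.exp ((2*(n:ℝ)+2-2*q)*s) := by
    rw [hE, ← Real.exp_nat_mul, ← Real.exp_nat_mul, ← Real.exp_nat_mul,
      ← Real.exp_add, ← Real.exp_add]
    congr 1
    push_cast
    ring
  -- assemble
  have habs : |T^2 - (g-1)*X|
      ≤ 16*C^2*e₁^2 + (M*(C*Real.exp (-q*s))^2) * (36*(1+C)^2 * E^2) := by
    have h3 : |g-1| * |X| ≤ (M*(C*Real.exp (-q*s))^2) * (36*(1+C)^2*E^2) :=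
      mul_le_mul hgb' hXbound (abs_nonneg X) (by positivity)
    calc |T^2 - (g-1)*X| ≤ |T^2| + |(g-1)*X| := abs_sub _ _
      _ = T^2 + |g-1| * |X| := by rw [abs_of_nonneg (sq_nonneg T), abs_mul]
      _ ≤ _ := by linarith
  have hσpow : σ^(2*n) ≤ E^(2*n) := pow_le_pow_left₀ (le_of_lt hσpos) hσle _
  have hσpow0 : 0 ≤ σ^(2*n) := le_of_lt (pow_pos hσpos _)
  calc |(1 : ℝ) / 2 * σ ^ (2 * n) *
          (1 - g * X) - (1 : ℝ) / 2 * σ ^ (2 * n) * (1 + r ^ 2 - r' ^ 2)|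
      = |(1 : ℝ) / 2 * σ ^ (2 * n) * (T^2 - (g-1) * X)| := by rw [hid]
    _ = 1/2 * σ^(2*n) * |T^2 - (g-1)*X| := by
        rw [abs_mul, abs_mul, abs_of_nonneg hσpow0, abs_of_nonneg (by norm_num : (0:ℝ) ≤ 1/2)]
    _ ≤ 1/2 * E^(2*n) * (16*C^2*e₁^2 + (M*(C*Real.exp (-q*s))^2) * (36*(1+C)^2 * E^2)) := by
        apply mul_le_mul
        · apply mul_le_mul_of_nonneg_left hσpow (by norm_num)
        · exact habs
        · exact abs_nonneg _
        · positivity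
    _ = (1/2 * (16*C^2 + 36*M*C^2*(1+C)^2)) * Real.exp ((2*(n:ℝ)+2-2*q)*s) := by
        linear_combination (8*C^2) * hprod1 + (18*M*C^2*(1+C)^2) * hprod2
    _ = _ := by rw [hM]

set_option maxHeartbeats 1000000 in
/-- The key algebraic limit equating the Chruściel–Nagy energy with the limit of the
hyperbolic Hawking mass: with `γ = (e^(−4nB) + 2n e^(2B))/(2n+1)` and the stated decay
of `ρ` and `B`, the difference between
`(1/2)(sinh s)^(2n)[1 − γ(ρ²/sinh²s − 2ρ²cosh²s/sinh²s + 2ρρ'cosh s/sinh s)]`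
and `(1/2)(sinh s)^(2n)(1 + ρ² − ρ'²)` tends to `0` as `s → ∞`. -/
theorem hyperbolic_energy_hawking_limit (n : ℕ) (hn : 1 ≤ n) (s₀ : ℝ) (hs₀ : 0 < s₀)
    (ρ B : ℝ → ℝ) (hρ : ContDiff ℝ 2 ρ) (hB : ContDiff ℝ 2 B)
    (q C : ℝ) (hq : (n : ℝ) + 1 < q)
    (hρ0 : ∀ s ≥ s₀, |ρ s - Real.sinh s| ≤ C * Real.exp ((1 - q) * s))
    (hρ1 : ∀ s ≥ s₀, |deriv ρ s - Real.cosh s| ≤ C * Real.exp ((1 - q) * s))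
    (hρ2 : ∀ s ≥ s₀, |deriv (deriv ρ) s - Real.sinh s| ≤ C * Real.exp ((1 - q) * s))
    (hB0 : ∀ s ≥ s₀, |B s| + |deriv B s| + |deriv (deriv B) s| ≤ C * Real.exp (-q * s)) :
    Tendsto (fun s : ℝ =>
        (1 : ℝ) / 2 * (Real.sinh s) ^ (2 * n) *
          (1 - (Real.exp (-(4 * (n : ℝ) * B s)) + 2 * (n : ℝ) * Real.exp (2 * B s)) /
              (2 * (n : ℝ) + 1) *
            (ρ s ^ 2 / (Real.sinh s) ^ 2 - 2 * ρ s ^ 2 * (Real.cosh s) ^ 2 / (Real.sinh s) ^ 2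
              + 2 * ρ s * deriv ρ s * Real.cosh s / Real.sinh s)) -
        (1 : ℝ) / 2 * (Real.sinh s) ^ (2 * n) * (1 + ρ s ^ 2 - (deriv ρ s) ^ 2))
      atTop (nhds 0) := by
  have hn1 : (1 : ℝ) ≤ (n : ℝ) := by exact_mod_cast hn
  have hqpos : 0 < q := by linarith
  have hC : 0 ≤ C := by
    have h2 : (0:ℝ) ≤ C * Real.exp (-q * s₀) := by
      have h := hB0 s₀ le_rfl
      have := abs_nonneg (B s₀)
      have := abs_nonneg (deriv B s₀)
      have := abs_nonneg (deriv (deriv B) s₀)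
      linarith
    exact le_of_mul_le_mul_right (by simpa using h2) (Real.exp_pos _)
  have hδ : 2*(n:ℝ) + 2 - 2*q < 0 := by linarith
  apply squeeze_zero_norm'
    (a := fun s => (1/2 * (16*C^2 + 36*(16*(n:ℝ)^2+8*(n:ℝ))*C^2*(1+C)^2))
      * Real.exp ((2*(n:ℝ)+2-2*q)*s))
  · have hS : ∀ᶠ s : ℝ in atTop,
        s₀ ≤ s ∧ 1 ≤ s ∧ Real.log ((4*(n:ℝ)+1)*C + 1) / q ≤ s :=
      (eventually_ge_atTop s₀).and ((eventually_ge_atTop 1).and (eventually_ge_atTop _))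
    filter_upwards [hS] with s hs
    obtain ⟨hss0, hs1, hslog⟩ := hs
    have hbB : |B s| ≤ C * Real.exp (-q*s) := by
      have h := hB0 s hss0
      have := abs_nonneg (deriv B s)
      have := abs_nonneg (deriv (deriv B) s)
      linarith
    have hbsmall : (4*(n:ℝ)+1) * |B s| ≤ 1 := by
      have hpos : (0:ℝ) < (4*(n:ℝ)+1)*C + 1 := by nlinarith
      have hlog : (4*(n:ℝ)+1)*C + 1 ≤ Real.exp (q*s) := by
        apply (Real.log_le_iff_le_exp hpos).mp
        calc Real.log ((4*(n:ℝ)+1)*C + 1)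
            = (Real.log ((4*(n:ℝ)+1)*C + 1) / q) * q := by field_simp
          _ ≤ s * q := mul_le_mul_of_nonneg_right hslog (le_of_lt hqpos)
          _ = q * s := by ring
      have hprod : Real.exp (-q*s) * Real.exp (q*s) = 1 := by
        rw [← Real.exp_add]; ring_nf; exact Real.exp_zero
      have hu : 0 < Real.exp (-q*s) := Real.exp_pos _
      have h1 : ((4*(n:ℝ)+1)*C + 1) * Real.exp (-q*s) ≤ Real.exp (q*s) * Real.exp (-q*s) :=
        mul_le_mul_of_nonneg_right hlog (le_of_lt hu)
      have h2 : Real.exp (q*s) * Real.exp (-q*s) = 1 := by linarith [hprod]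
      have h3 : (4*(n:ℝ)+1) * (C * Real.exp (-q*s)) ≤ 1 := by nlinarith
      have h4 := mul_le_mul_of_nonneg_left hbB (by positivity : (0:ℝ) ≤ 4*(n:ℝ)+1)
      linarith
    have := bound_aux n C q s (ρ s) (deriv ρ s) (B s) hn1 hC hqpos hs1
      (hρ0 s hss0) (hρ1 s hss0) hbB hbsmall
    simpa [Real.norm_eq_abs] using this
  · have h1 : Tendsto (fun s : ℝ => (2*(n:ℝ)+2-2*q)*s) atTop atBot :=
      (tendsto_const_mul_atBot_of_neg hδ).mpr tendsto_id
    have h2 : Tendsto (fun s : ℝ => Real.exp ((2*(n:ℝ)+2-2*q)*s)) atTop (nhds 0) :=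
      Real.tendsto_exp_comp_nhds_zero.mpr h1
    simpa using h2.const_mul (1/2 * (16*C^2 + 36*(16*(n:ℝ)^2+8*(n:ℝ))*C^2*(1+C)^2))
end

section
/- Let n ≥ 1 and let r₊ > 0, a ≥ 0 satisfy the subextremality condition r₊²(n + (n+1)r₊²) − a²(n+1)(1 + r₊²)² ≥ 0. Then a² < 1 and r₊²(1 − a²) − a² > 0. -/
/-! Writing `x = r₊²`, the left side of the subextremality condition is
`x (n + (n+1) x) = (n+1) x (1+x) - x < (n+1) x (1+x)`, so dividing by `(n+1)(1+x)` gives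
`a² (1 + x) < x`. This single inequality is `x (1 - a²) - a² > 0`, and it forces `a² < 1`. -/

lemma mul_one_add_lt_of_le_mul_sub {c x A : ℝ} (hc : 0 < c) (hx : 0 < x)
    (h : A * c * (1 + x) ^ 2 ≤ x * (c * (1 + x) - 1)) : A * (1 + x) < x := by
  have hcx : 0 ≤ c * (1 + x) := by positivity
  refine lt_of_mul_lt_mul_right ?_ hcx
  calc A * (1 + x) * (c * (1 + x)) = A * c * (1 + x) ^ 2 := by ring
    _ ≤ x * (c * (1 + x) - 1) := h
    _ < x * (c * (1 + x)) := by rw [mul_sub, mul_one]; linarith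

lemma lt_one_of_mul_one_add_lt {x A : ℝ} (hx : 0 ≤ x) (h : A * (1 + x) < x) : A < 1 :=
  lt_of_mul_lt_mul_right (by linarith) (by positivity : 0 ≤ 1 + x)

theorem myersPerryAdS_subextremal_general (n : ℕ) (rp a : ℝ)
    (hrp : 0 < rp)
    (hsub : 0 ≤ rp ^ 2 * ((n : ℝ) + ((n : ℝ) + 1) * rp ^ 2)
        - a ^ 2 * ((n : ℝ) + 1) * (1 + rp ^ 2) ^ 2) :
    a ^ 2 < 1 ∧ 0 < rp ^ 2 * (1 - a ^ 2) - a ^ 2 := by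
  have hx : 0 < rp ^ 2 := by positivity
  have key : a ^ 2 * (1 + rp ^ 2) < rp ^ 2 :=
    mul_one_add_lt_of_le_mul_sub (c := (n : ℝ) + 1) (by positivity) hx
      (by linear_combination hsub)
  exact ⟨lt_one_of_mul_one_add_lt hx.le key, by linear_combination key⟩

/-- Subextremality of Myers–Perry–AdS: if `r₊²(n + (n+1)r₊²) − a²(n+1)(1+r₊²)² ≥ 0`
with `r₊ > 0` and `a ≥ 0`, then `a² < 1` and `r₊²(1 − a²) − a² > 0`. -/
theorem myersPerryAdS_subextremal (n : ℕ) (hn : 1 ≤ n) (rp a : ℝ)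
    (hrp : 0 < rp) (ha : 0 ≤ a)
    (hsub : 0 ≤ rp ^ 2 * ((n : ℝ) + ((n : ℝ) + 1) * rp ^ 2)
        - a ^ 2 * ((n : ℝ) + 1) * (1 + rp ^ 2) ^ 2) :
    a ^ 2 < 1 ∧ 0 < rp ^ 2 * (1 - a ^ 2) - a ^ 2 :=
  myersPerryAdS_subextremal_general n rp a hrp hsub
end
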